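/- arXiv:0911.4477 — 4 statements merged into one kernel-verified Lean document; each statement's English description precedes it below -/
import Mathlib

section
/- Let n ≥ 3 be an integer and let v : ℝ → ℝ be a twice differentiable function with 0 < v(t) ≤ 1 for all t ∈ ℝ satisfying the Delaunay ODE v''(t) − ((n−2)²/4)·v(t) + (n·(n−2)/4)·v(t)^((n+2)/(n−2)) = 0 for all t ∈ ℝ, and assume H(v(0), v'(0)) ≤ 0. Then for every t ∈ ℝ one has |v'(t)| ≤ ((n−2)/2)·v(t) and |v''(t)| ≤ (n·(n−2)/4)·v(t). -/
/-- The Hamiltonian energy of the Delaunay ODE: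
`H(v, w) = w² − ((n−2)²/4)·v² + ((n−2)²/4)·v^(2n/(n−2))`. -/
noncomputable def delaunayH (n : ℕ) (v w : ℝ) : ℝ :=
  w ^ 2 - (((n : ℝ) - 2) ^ 2 / 4) * v ^ 2
    + (((n : ℝ) - 2) ^ 2 / 4) * v ^ (2 * (n : ℝ) / ((n : ℝ) - 2))

/-! The energy `H(v, v')` is conserved along positive solutions of the Delaunay ODE, so it stays
`≤ 0`; dropping its nonnegative last term gives `v'² ≤ ((n−2)/2)² v²`. The bound on `v''` is read
off the ODE, using `0 ≤ v^((n+2)/(n−2)) ≤ v` for `0 < v ≤ 1`. -/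

section

variable {n : ℕ}

theorem hasDerivAt_delaunayH {v w : ℝ → ℝ} {v' w' t : ℝ} (hv : HasDerivAt v v' t)
    (hw : HasDerivAt w w' t) (hpos : 0 < v t) :
    HasDerivAt (fun s => delaunayH n (v s) (w s))
      (2 * w t * w' - ((n : ℝ) - 2) ^ 2 / 2 * v t * v'
        + ((n : ℝ) - 2) ^ 2 / 4 * (2 * n / (n - 2)) * v t ^ (2 * (n : ℝ) / (n - 2) - 1) * v') t := by
  have hpow := hv.rpow_const (p := 2 * (n : ℝ) / (n - 2)) (Or.inl hpos.ne')
  have h := ((hw.pow 2).sub ((hv.pow 2).const_mul (((n : ℝ) - 2) ^ 2 / 4))).add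
    (hpow.const_mul (((n : ℝ) - 2) ^ 2 / 4))
  refine (h.congr_deriv ?_).congr_of_eventuallyEq (.of_forall fun s => ?_)
  · push_cast
    ring
  · rfl

theorem hasDerivAt_delaunayH_of_ode (hn : (n : ℝ) ≠ 2) {v : ℝ → ℝ} {t : ℝ}
    (hv : DifferentiableAt ℝ v t) (hv' : DifferentiableAt ℝ (deriv v) t) (hpos : 0 < v t)
    (hode : deriv (deriv v) t - (((n : ℝ) - 2) ^ 2 / 4) * v t
      + ((n : ℝ) * ((n : ℝ) - 2) / 4) * v t ^ (((n : ℝ) + 2) / ((n : ℝ) - 2)) = 0) :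
    HasDerivAt (fun s => delaunayH n (v s) (deriv v s)) 0 t := by
  have hd : (n : ℝ) - 2 ≠ 0 := sub_ne_zero.mpr hn
  have hexp : 2 * (n : ℝ) / (n - 2) - 1 = (n + 2) / (n - 2) := by field_simp; ring
  have hcoef : ((n : ℝ) - 2) ^ 2 / 4 * (2 * n / (n - 2)) = 2 * (n * (n - 2) / 4) := by
    field_simp
  convert hasDerivAt_delaunayH (n := n) hv.hasDerivAt hv'.hasDerivAt hpos using 1
  rw [hexp, hcoef]
  linear_combination (-2 * deriv v t) * hode

theorem delaunayH_eq_of_ode (hn : (n : ℝ) ≠ 2) {v : ℝ → ℝ}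
    (hv : Differentiable ℝ v) (hv' : Differentiable ℝ (deriv v)) (hpos : ∀ t, 0 < v t)
    (hode : ∀ t : ℝ, deriv (deriv v) t - (((n : ℝ) - 2) ^ 2 / 4) * v t
      + ((n : ℝ) * ((n : ℝ) - 2) / 4) * v t ^ (((n : ℝ) + 2) / ((n : ℝ) - 2)) = 0)
    (s t : ℝ) :
    delaunayH n (v s) (deriv v s) = delaunayH n (v t) (deriv v t) :=
  have hderiv t := hasDerivAt_delaunayH_of_ode hn (hv t) (hv' t) (hpos t) (hode t)
  is_const_of_deriv_eq_zero (fun t => (hderiv t).differentiableAt) (fun t => (hderiv t).deriv) s t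

theorem abs_le_of_delaunayH_nonpos (hn : 2 ≤ n) {v w : ℝ} (hv : 0 ≤ v)
    (hH : delaunayH n v w ≤ 0) : |w| ≤ ((n : ℝ) - 2) / 2 * v := by
  have hn' : (2 : ℝ) ≤ n := by exact_mod_cast hn
  have hrpow : 0 ≤ v ^ (2 * (n : ℝ) / (n - 2)) := Real.rpow_nonneg hv _
  have hsq : w ^ 2 ≤ (((n : ℝ) - 2) / 2 * v) ^ 2 := by
    unfold delaunayH at hH
    nlinarith [sq_nonneg ((n : ℝ) - 2)]
  exact abs_le_of_sq_le_sq hsq (by positivity)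

end

theorem abs_mul_sub_mul_le {a b x y : ℝ} (ha : 0 ≤ a) (hab : a ≤ b) (hy : 0 ≤ y) (hyx : y ≤ x) :
    |a * x - b * y| ≤ b * x := by
  rw [abs_le]
  constructor <;> nlinarith

theorem stmt_2 (n : ℕ) (hn : 3 ≤ n) (v : ℝ → ℝ)
    (hv : Differentiable ℝ v) (hv' : Differentiable ℝ (deriv v))
    (hpos : ∀ t : ℝ, 0 < v t) (hle : ∀ t : ℝ, v t ≤ 1)
    (hode : ∀ t : ℝ, deriv (deriv v) t - (((n : ℝ) - 2) ^ 2 / 4) * v t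
      + ((n : ℝ) * ((n : ℝ) - 2) / 4) * v t ^ (((n : ℝ) + 2) / ((n : ℝ) - 2)) = 0)
    (hH : delaunayH n (v 0) (deriv v 0) ≤ 0) :
    ∀ t : ℝ, |deriv v t| ≤ (((n : ℝ) - 2) / 2) * v t ∧
      |deriv (deriv v) t| ≤ ((n : ℝ) * ((n : ℝ) - 2) / 4) * v t := by
  intro t
  have hn3 : (3 : ℝ) ≤ n := by exact_mod_cast hn
  have hHt : delaunayH n (v t) (deriv v t) ≤ 0 :=
    (delaunayH_eq_of_ode (by linarith) hv hv' hpos hode t 0).trans_le hH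
  refine ⟨abs_le_of_delaunayH_nonpos (by omega) (hpos t).le hHt, ?_⟩
  have hexp : 1 ≤ ((n : ℝ) + 2) / (n - 2) := by rw [le_div_iff₀ (by linarith)]; linarith
  rw [show deriv (deriv v) t = ((n : ℝ) - 2) ^ 2 / 4 * v t
      - n * (n - 2) / 4 * v t ^ (((n : ℝ) + 2) / (n - 2)) by linear_combination hode t]
  exact abs_mul_sub_mul_le (by positivity) (by nlinarith)
    (Real.rpow_nonneg (hpos t).le _) (Real.rpow_le_self_of_le_one (hpos t).le (hle t) hexp)
end

section
/- Let n ≥ 3 be an integer and let v : ℝ → ℝ be a twice differentiable function with v(t) > 0 for all t ∈ ℝ satisfying the Delaunay ODE v''(t) − ((n−2)²/4)·v(t) + (n·(n−2)/4)·v(t)^((n+2)/(n−2)) = 0 for all t ∈ ℝ, and assume H(v(0), v'(0)) < 0. Then v(t) < 1 for every t ∈ ℝ. -/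
section Delaunay

variable {n : ℕ}

lemma delaunay_exponent_sub_one (hn : (n : ℝ) ≠ 2) :
    2 * (n : ℝ) / ((n : ℝ) - 2) - 1 = ((n : ℝ) + 2) / ((n : ℝ) - 2) := by
  have : (n : ℝ) - 2 ≠ 0 := sub_ne_zero.mpr hn
  field_simp
  ring

lemma delaunay_coeff_mul_exponent (hn : (n : ℝ) ≠ 2) :
    ((n : ℝ) - 2) ^ 2 / 4 * (2 * (n : ℝ) / ((n : ℝ) - 2))
      = 2 * ((n : ℝ) * ((n : ℝ) - 2) / 4) := by
  have : (n : ℝ) - 2 ≠ 0 := sub_ne_zero.mpr hn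
  field_simp

lemma hasDerivAt_delaunayH_comp (hn : (n : ℝ) ≠ 2) {v : ℝ → ℝ} {t : ℝ}
    (hv : DifferentiableAt ℝ v t) (hv' : DifferentiableAt ℝ (deriv v) t) (hpos : 0 < v t) :
    HasDerivAt (fun s => delaunayH n (v s) (deriv v s))
      (2 * deriv v t * (deriv (deriv v) t - (((n : ℝ) - 2) ^ 2 / 4) * v t
        + ((n : ℝ) * ((n : ℝ) - 2) / 4) * v t ^ (((n : ℝ) + 2) / ((n : ℝ) - 2)))) t := by
  set p : ℝ := 2 * (n : ℝ) / ((n : ℝ) - 2)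
  have hw2 : HasDerivAt (fun s => deriv v s ^ 2) (2 * deriv v t * deriv (deriv v) t) t := by
    simpa [mul_comm] using hv'.hasDerivAt.fun_pow 2
  have hv2 : HasDerivAt (fun s => v s ^ 2) (2 * v t * deriv v t) t := by
    simpa [mul_comm] using hv.hasDerivAt.fun_pow 2
  have hvp : HasDerivAt (fun s => v s ^ p) (deriv v t * p * v t ^ (p - 1)) t :=
    hv.hasDerivAt.rpow_const (Or.inl hpos.ne')
  refine ((hw2.fun_sub (hv2.const_mul _)).fun_add (hvp.const_mul _)).congr_deriv ?_
  rw [delaunay_exponent_sub_one hn]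
  linear_combination (deriv v t * v t ^ (((n : ℝ) + 2) / ((n : ℝ) - 2)))
    * delaunay_coeff_mul_exponent hn

lemma delaunayH_comp_eq_of_ode (hn : (n : ℝ) ≠ 2) {v : ℝ → ℝ}
    (hv : Differentiable ℝ v) (hv' : Differentiable ℝ (deriv v)) (hpos : ∀ t, 0 < v t)
    (hode : ∀ t : ℝ, deriv (deriv v) t - (((n : ℝ) - 2) ^ 2 / 4) * v t
      + ((n : ℝ) * ((n : ℝ) - 2) / 4) * v t ^ (((n : ℝ) + 2) / ((n : ℝ) - 2)) = 0)
    (t s : ℝ) :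
    delaunayH n (v t) (deriv v t) = delaunayH n (v s) (deriv v s) := by
  have hzero : ∀ r, HasDerivAt (fun s => delaunayH n (v s) (deriv v s)) 0 r := fun r => by
    simpa [hode r] using hasDerivAt_delaunayH_comp hn (hv r) (hv' r) (hpos r)
  exact is_const_of_deriv_eq_zero (fun r => (hzero r).differentiableAt)
    (fun r => (hzero r).deriv) t s

lemma delaunayH_nonneg_of_one_le (hn : 2 < (n : ℝ)) {v : ℝ} (hv : 1 ≤ v) (w : ℝ) :
    0 ≤ delaunayH n v w := by
  have hsub : 0 < (n : ℝ) - 2 := sub_pos.mpr hn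
  have hexp : (2 : ℝ) ≤ 2 * (n : ℝ) / ((n : ℝ) - 2) := by
    rw [le_div_iff₀ hsub]
    linarith
  have hpow : v ^ 2 ≤ v ^ (2 * (n : ℝ) / ((n : ℝ) - 2)) := by
    simpa using Real.rpow_le_rpow_of_exponent_le hv hexp
  have hc : 0 ≤ ((n : ℝ) - 2) ^ 2 / 4 := by positivity
  unfold delaunayH
  nlinarith [sq_nonneg w, mul_le_mul_of_nonneg_left hpow hc]

end Delaunay

theorem stmt_4 (n : ℕ) (hn : 3 ≤ n) (v : ℝ → ℝ)
    (hv : Differentiable ℝ v) (hv' : Differentiable ℝ (deriv v))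
    (hpos : ∀ t : ℝ, 0 < v t)
    (hode : ∀ t : ℝ, deriv (deriv v) t - (((n : ℝ) - 2) ^ 2 / 4) * v t
      + ((n : ℝ) * ((n : ℝ) - 2) / 4) * v t ^ (((n : ℝ) + 2) / ((n : ℝ) - 2)) = 0)
    (hH : delaunayH n (v 0) (deriv v 0) < 0) :
    ∀ t : ℝ, v t < 1 := by
  have hn2 : (2 : ℝ) < n := by exact_mod_cast hn
  intro t
  by_contra! hle
  have hconst := delaunayH_comp_eq_of_ode hn2.ne' hv hv' hpos hode t 0
  have := delaunayH_nonneg_of_one_le hn2 hle (deriv v t)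
  linarith
end

section
/- Let n ≥ 3 be an integer and let v : ℝ → ℝ be a positive, twice continuously differentiable function satisfying the Delaunay ODE v''(t) − ((n−2)²/4)·v(t) + (n·(n−2)/4)·v(t)^((n+2)/(n−2)) = 0 for all t ∈ ℝ. Define u on ℝⁿ \ {0} by u(x) = ‖x‖^((2−n)/2) · v(−log ‖x‖). Then u is positive, twice continuously differentiable on ℝⁿ \ {0}, and satisfies Δu(x) + (n·(n−2)/4)·u(x)^((n+2)/(n−2)) = 0 for all x ≠ 0, where Δu denotes the Euclidean Laplacian of u (the sum of its second partial derivatives). -/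
/-!
Write `s = ‖x‖ ^ 2`, so that `u x = g s` with `g s = s ^ ((2 - n) / 4) * v (-log s / 2)` smooth for
`s > 0`. For such radial functions `Δu = 4 s g'' + 2 n g'`, and the chain rule in the Emden–Fowler
variable `t = -log ‖x‖` gives `Δu = ‖x‖ ^ (-(n + 2) / 2) * (v'' - (n - 2) ^ 2 / 4 * v)`: the first-order
terms cancel exactly because of the exponent `(2 - n) / 2`. The Delaunay equation then turns this
into `-(n (n - 2) / 4) * u ^ ((n + 2) / (n - 2))`, since `(2 - n) / 2 * (n + 2) / (n - 2) = -(n + 2) / 2`.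
-/

open EuclideanSpace in
/-- The Euclidean Laplacian: the sum of the second partial derivatives. -/
noncomputable def lap {n : ℕ} (u : EuclideanSpace ℝ (Fin n) → ℝ)
    (x : EuclideanSpace ℝ (Fin n)) : ℝ :=
  ∑ i : Fin n,
    fderiv ℝ (fun y => fderiv ℝ u y (EuclideanSpace.single i 1)) x
      (EuclideanSpace.single i 1)

open Real Filter Topology

section Laplacian

variable {n : ℕ}

theorem lap_congr {u w : EuclideanSpace ℝ (Fin n) → ℝ} {x : EuclideanSpace ℝ (Fin n)}
    (h : u =ᶠ[𝓝 x] w) : lap u x = lap w x := by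
  have hd : ∀ i : Fin n, (fun y => fderiv ℝ u y (EuclideanSpace.single i 1))
      =ᶠ[𝓝 x] fun y => fderiv ℝ w y (EuclideanSpace.single i 1) := fun i =>
    h.eventuallyEq_nhds.mono fun y hy => by simp only [hy.fderiv_eq]
  simp only [lap, (hd _).fderiv_eq]

theorem lap_comp_norm_sq {f f' : ℝ → ℝ} {f'' : ℝ} {x : EuclideanSpace ℝ (Fin n)}
    (hf : ∀ᶠ s in 𝓝 (‖x‖ ^ 2), HasDerivAt f (f' s) s) (hf' : HasDerivAt f' f'' (‖x‖ ^ 2)) :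
    lap (fun y => f (‖y‖ ^ 2)) x = 4 * ‖x‖ ^ 2 * f'' + 2 * n * f' (‖x‖ ^ 2) := by
  have hnormSq : ∀ y : EuclideanSpace ℝ (Fin n),
      HasFDerivAt (fun z : EuclideanSpace ℝ (Fin n) => ‖z‖ ^ 2) (2 • innerSL ℝ y) y :=
    fun y => (hasStrictFDerivAt_norm_sq y).hasFDerivAt
  have hfirst : ∀ i : Fin n, (fun y => fderiv ℝ (fun z => f (‖z‖ ^ 2)) y (EuclideanSpace.single i 1))
      =ᶠ[𝓝 x] fun y => f' (‖y‖ ^ 2) * (2 * y i) := fun i => by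
    filter_upwards [(contDiff_norm_sq ℝ (n := 0)).continuous.continuousAt.eventually hf]
      with y hy
    have hy' : HasFDerivAt (fun z => f (‖z‖ ^ 2)) _ y := hy.comp_hasFDerivAt y (hnormSq y)
    rw [hy'.fderiv]
    simp [EuclideanSpace.inner_single_right]
  have hsecond : ∀ i : Fin n,
      fderiv ℝ (fun y => fderiv ℝ (fun z => f (‖z‖ ^ 2)) y (EuclideanSpace.single i 1)) x
        (EuclideanSpace.single i 1) = f'' * (2 * x i) * (2 * x i) + f' (‖x‖ ^ 2) * 2 := fun i => by
    have hprod : HasFDerivAt (fun y : EuclideanSpace ℝ (Fin n) => f' (‖y‖ ^ 2) * (2 * y i)) _ x :=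
      (hf'.comp_hasFDerivAt x (hnormSq x)).mul
        (((EuclideanSpace.proj i : EuclideanSpace ℝ (Fin n) →L[ℝ] ℝ).hasFDerivAt).const_mul 2)
    rw [(hfirst i).fderiv_eq, hprod.fderiv]
    simp only [Function.comp_apply, add_apply, smul_apply, smul_eq_mul, nsmul_eq_mul,
      PiLp.proj_apply, PiLp.single_eq_same, coe_innerSL_apply, EuclideanSpace.inner_single_right,
      conj_trivial, mul_one, one_mul, Nat.cast_ofNat]
    ring
  have hsum : ∑ i : Fin n, x i ^ 2 = ‖x‖ ^ 2 := by
    rw [EuclideanSpace.norm_sq_eq]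
    simp [sq_abs]
  simp only [lap, hsecond, Finset.sum_add_distrib, Finset.sum_const, Finset.card_univ,
    Fintype.card_fin, nsmul_eq_mul, ← hsum, Finset.mul_sum, Finset.sum_mul]
  congr 1
  · exact Finset.sum_congr rfl fun i _ => by ring
  · ring

end Laplacian

-- `r ^ b * w (-log r)` written in the variable `s = r ^ 2`, which is smooth on the whole space.
noncomputable def emdenFowler (b : ℝ) (w : ℝ → ℝ) (s : ℝ) : ℝ :=
  s ^ (b / 2) * w (-log s / 2)

theorem rpow_mul_comp_neg_log_eq_emdenFowler {r : ℝ} (hr : 0 ≤ r) (b : ℝ) (w : ℝ → ℝ) :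
    r ^ b * w (-log r) = emdenFowler b w (r ^ 2) := by
  rw [emdenFowler, log_pow, ← rpow_natCast, ← rpow_mul hr]
  congr 2 <;> push_cast <;> ring

theorem hasDerivAt_emdenFowler (b : ℝ) {w : ℝ → ℝ} (hw : Differentiable ℝ w) {s : ℝ}
    (hs : 0 < s) :
    HasDerivAt (emdenFowler b w)
      (emdenFowler (b - 2) (fun t => (b * w t - deriv w t) / 2) s) s := by
  have hpow : HasDerivAt (fun s : ℝ => s ^ (b / 2)) (b / 2 * s ^ (b / 2 - 1)) s :=
    hasDerivAt_rpow_const (Or.inl hs.ne')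
  have hw' : HasDerivAt (fun s => w (-log s / 2)) (deriv w (-log s / 2) * (-s⁻¹ / 2)) s :=
    (hw _).hasDerivAt.comp s ((hasDerivAt_log hs.ne').neg.div_const 2)
  refine (hpow.mul hw').congr_deriv ?_
  have hpow_sub : s ^ (b / 2 - 1) = s ^ ((b - 2) / 2) := by ring_nf
  have hpow_inv : s ^ (b / 2) * s⁻¹ = s ^ ((b - 2) / 2) := by
    rw [← rpow_neg_one, ← rpow_add hs]; ring_nf
  rw [emdenFowler, ← hpow_inv, hpow_sub, ← hpow_inv]
  ring

theorem contDiffOn_emdenFowler {k : WithTop ℕ∞} (b : ℝ) {w : ℝ → ℝ} (hw : ContDiff ℝ k w) :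
    ContDiffOn ℝ k (emdenFowler b w) (Set.Ioi 0) := fun s (hs : 0 < s) =>
  ((contDiffAt_rpow_const_of_ne hs.ne').mul
    (hw.contDiffAt.comp s ((contDiffAt_log.mpr hs.ne').neg.div_const 2))).contDiffWithinAt

section Delaunay

variable {n : ℕ} {v : ℝ → ℝ} {u : EuclideanSpace ℝ (Fin n) → ℝ}

theorem contDiffOn_of_eq_rpow_mul_comp_neg_log {k : WithTop ℕ∞} {b : ℝ} (hv : ContDiff ℝ k v)
    (hu : ∀ y : EuclideanSpace ℝ (Fin n), y ≠ 0 → u y = ‖y‖ ^ b * v (-log ‖y‖)) :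
    ContDiffOn ℝ k u {0}ᶜ := by
  refine ((contDiffOn_emdenFowler b hv).comp (contDiff_norm_sq ℝ).contDiffOn
    fun y (hy : y ≠ 0) => pow_pos (norm_pos_iff.mpr hy) 2).congr fun y hy => ?_
  exact (hu y hy).trans (rpow_mul_comp_neg_log_eq_emdenFowler (norm_nonneg y) b v)

theorem lap_eq_of_eq_rpow_mul_comp_neg_log (hv : ContDiff ℝ 2 v)
    (hu : ∀ y : EuclideanSpace ℝ (Fin n), y ≠ 0 →
      u y = ‖y‖ ^ ((2 - (n : ℝ)) / 2) * v (-log ‖y‖))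
    {x : EuclideanSpace ℝ (Fin n)} (hx : x ≠ 0) :
    lap u x = ‖x‖ ^ (-((n : ℝ) + 2) / 2) *
      (deriv (deriv v) (-log ‖x‖) - (((n : ℝ) - 2) ^ 2 / 4) * v (-log ‖x‖)) := by
  set b : ℝ := (2 - (n : ℝ)) / 2 with hb
  set w : ℝ → ℝ := fun t => (b * v t - deriv v t) / 2 with hw
  have hv' : ContDiff ℝ 1 (deriv v) := (contDiff_succ_iff_deriv.mp hv).2.2
  have hw_diff : Differentiable ℝ w :=
    (((hv.differentiable two_ne_zero).const_mul b).sub (hv'.differentiable one_ne_zero)).div_const 2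
  have hw_deriv : ∀ t, deriv w t = (b * deriv v t - deriv (deriv v) t) / 2 := fun t =>
    ((((hv.differentiable two_ne_zero t).hasDerivAt.const_mul b).sub
      (hv'.differentiable one_ne_zero t).hasDerivAt).div_const 2).deriv
  have hs : 0 < ‖x‖ ^ 2 := by positivity
  have hu' : u =ᶠ[𝓝 x] fun y => emdenFowler b v (‖y‖ ^ 2) :=
    (eventually_ne_nhds hx).mono fun y hy =>
      (hu y hy).trans (rpow_mul_comp_neg_log_eq_emdenFowler (norm_nonneg y) b v)
  rw [lap_congr hu', lap_comp_norm_sq ((eventually_gt_nhds hs).mono fun s hs =>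
      hasDerivAt_emdenFowler b (hv.differentiable two_ne_zero) hs)
    (hasDerivAt_emdenFowler (b - 2) hw_diff hs)]
  simp only [← rpow_mul_comp_neg_log_eq_emdenFowler (norm_nonneg x), hw_deriv]
  have hpow : ‖x‖ ^ 2 * ‖x‖ ^ (b - 2 - 2) = ‖x‖ ^ (b - 2) := by
    rw [← rpow_natCast, ← rpow_add (norm_pos_iff.mpr hx)]; ring_nf
  rw [show -((n : ℝ) + 2) / 2 = b - 2 by ring, ← hpow, hw, hb]
  ring

end Delaunay

theorem stmt_9_general (n : ℕ) (v : ℝ → ℝ)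
    (hpos : ∀ t : ℝ, 0 < v t) (hC2 : ContDiff ℝ 2 v)
    (hode : ∀ t : ℝ, deriv (deriv v) t - (((n : ℝ) - 2) ^ 2 / 4) * v t
      + ((n : ℝ) * ((n : ℝ) - 2) / 4) * v t ^ (((n : ℝ) + 2) / ((n : ℝ) - 2)) = 0)
    (u : EuclideanSpace ℝ (Fin n) → ℝ)
    (hu : ∀ x : EuclideanSpace ℝ (Fin n), x ≠ 0 →
      u x = ‖x‖ ^ ((2 - (n : ℝ)) / 2) * v (-Real.log ‖x‖)) :
    (∀ x : EuclideanSpace ℝ (Fin n), x ≠ 0 → 0 < u x) ∧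
    ContDiffOn ℝ 2 u {(0 : EuclideanSpace ℝ (Fin n))}ᶜ ∧
    ∀ x : EuclideanSpace ℝ (Fin n), x ≠ 0 →
      lap u x + ((n : ℝ) * ((n : ℝ) - 2) / 4) * u x ^ (((n : ℝ) + 2) / ((n : ℝ) - 2)) = 0 := by
  refine ⟨fun x hx => ?_, contDiffOn_of_eq_rpow_mul_comp_neg_log hC2 hu, fun x hx => ?_⟩
  · rw [hu x hx]
    exact mul_pos (rpow_pos_of_pos (norm_pos_iff.mpr hx) _) (hpos _)
  rw [lap_eq_of_eq_rpow_mul_comp_neg_log hC2 hu hx, hu x hx]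
  rcases eq_or_ne (n : ℝ) 2 with hn | hn
  · rw [hn] at hode ⊢
    linear_combination ‖x‖ ^ (-(2 + 2) / 2 : ℝ) * hode (-log ‖x‖)
  have hpow : (‖x‖ ^ ((2 - (n : ℝ)) / 2) * v (-log ‖x‖)) ^ (((n : ℝ) + 2) / ((n : ℝ) - 2)) =
      ‖x‖ ^ (-((n : ℝ) + 2) / 2) * v (-log ‖x‖) ^ (((n : ℝ) + 2) / ((n : ℝ) - 2)) := by
    rw [mul_rpow (by positivity) (hpos _).le, ← rpow_mul (norm_nonneg x)]
    congr 2
    field_simp [sub_ne_zero.mpr hn]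
    ring
  rw [hpow]
  linear_combination ‖x‖ ^ (-((n : ℝ) + 2) / 2) * hode (-log ‖x‖)

theorem stmt_9 (n : ℕ) (hn : 3 ≤ n) (v : ℝ → ℝ)
    (hpos : ∀ t : ℝ, 0 < v t) (hC2 : ContDiff ℝ 2 v)
    (hode : ∀ t : ℝ, deriv (deriv v) t - (((n : ℝ) - 2) ^ 2 / 4) * v t
      + ((n : ℝ) * ((n : ℝ) - 2) / 4) * v t ^ (((n : ℝ) + 2) / ((n : ℝ) - 2)) = 0)
    (u : EuclideanSpace ℝ (Fin n) → ℝ)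
    (hu : ∀ x : EuclideanSpace ℝ (Fin n), x ≠ 0 →
      u x = ‖x‖ ^ ((2 - (n : ℝ)) / 2) * v (-Real.log ‖x‖)) :
    (∀ x : EuclideanSpace ℝ (Fin n), x ≠ 0 → 0 < u x) ∧
    ContDiffOn ℝ 2 u {(0 : EuclideanSpace ℝ (Fin n))}ᶜ ∧
    ∀ x : EuclideanSpace ℝ (Fin n), x ≠ 0 →
      lap u x + ((n : ℝ) * ((n : ℝ) - 2) / 4) * u x ^ (((n : ℝ) + 2) / ((n : ℝ) - 2)) = 0 :=
  stmt_9_general n v hpos hC2 hode u hu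
end

section
/- Let n ≥ 3 be an integer, let r, ε, Λ > 0, and let F, G : ℝ × ℝ → ℝ be continuous functions. Let D = {(b, λ) ∈ ℝ × ℝ : |b| ≤ 1/2 and |λ| ≤ Λ}. Assume that for every (b, λ) ∈ D one has |F(b,λ)| + |G(b,λ)|/(n−2) ≤ 1/2 and ε²/2 + r^(n−2)·|G(b,λ)|/(n−2) ≤ Λ. Then there exists (b, λ) ∈ D such that b + (ε²/(4·(1+b)) − λ)·r^(2−n) = F(b,λ) and (2−n)·(ε²/(4·(1+b)) − λ)·r^(2−n) = G(b,λ). -/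
/-!
The two equations say exactly that `(b, λ)` is a fixed point of the map
`T (b, λ) = (F + G / (n - 2), ε² / (4 (1 + b)) + r ^ (n - 2) G / (n - 2))`, and the hypotheses say
that `T` maps the rectangle `D` into itself, so Brouwer's theorem in the plane applies.

Brouwer's theorem comes from continuous logarithms on simply connected domains: if a continuous
`f : ℂ → ℂ` with range in the disc of radius `R` had no fixed point, `z ↦ z - f z` would have a
continuous logarithm on `ℂ`; on the circle of radius `R` the point `1 - f z / z` stays in the
slit plane, so subtracting its principal logarithm gives a continuous logarithm of `z` itself on
that circle, which is impossible.
-/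

open Set Function Metric

namespace Complex

theorem eq_of_continuous_of_exp_eq {X : Type*} [TopologicalSpace X] [PreconnectedSpace X]
    {f : X → ℂ} (hf : Continuous f) {c : ℂ} (hc : ∀ x, exp (f x) = c) (x y : X) :
    f x = f y := by
  have hdiscrete : IsDiscrete (AddSubgroup.zmultiples (2 * Real.pi * I) : Set ℂ) :=
    ⟨NormedSpace.discreteTopology_zmultiples _⟩
  have hmaps : MapsTo (fun z ↦ f z - f y) univ (AddSubgroup.zmultiples (2 * Real.pi * I)) := by
    intro z _
    have hc0 : c ≠ 0 := hc y ▸ exp_ne_zero _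
    obtain ⟨n, hn⟩ := exp_eq_one_iff.1
      (show exp (f z - f y) = 1 by rw [exp_sub, hc, hc, div_self hc0])
    exact ⟨n, by simpa [zsmul_eq_mul] using hn.symm⟩
  simpa [sub_eq_zero] using isPreconnected_univ.constant_of_mapsTo hdiscrete
    (hf.sub continuous_const).continuousOn hmaps (mem_univ x) (mem_univ y)

theorem not_forall_exp_eq_of_continuousOn_sphere {L : ℂ → ℂ} {R : ℝ} (hR : 0 < R)
    (hL : ContinuousOn L (sphere 0 R)) : ¬ ∀ z ∈ sphere (0 : ℂ) R, exp (L z) = z := by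
  intro hexp
  set γ : ℝ → ℂ := fun t ↦ R * exp (t * I)
  have hγ : ∀ t, γ t ∈ sphere (0 : ℂ) R := fun t ↦ by
    simp [γ, norm_exp_ofReal_mul_I, abs_of_pos hR]
  have hcont : Continuous fun t : ℝ ↦ L (γ t) - t * I :=
    (hL.comp_continuous (by fun_prop) hγ).sub (by fun_prop)
  have hconst : ∀ t : ℝ, exp (L (γ t) - t * I) = R := fun t ↦ by
    rw [exp_sub, hexp _ (hγ t), div_eq_iff (exp_ne_zero _)]
  have := eq_of_continuous_of_exp_eq hcont hconst (2 * Real.pi) 0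
  have hγ2π : γ (2 * Real.pi) = γ 0 := by simp [γ, exp_two_pi_mul_I]
  rw [hγ2π] at this
  simp [Real.pi_ne_zero, I_ne_zero] at this

theorem exists_isFixedPt_of_isBounded_range {f : ℂ → ℂ} (hf : Continuous f)
    (hb : Bornology.IsBounded (range f)) : ∃ z, IsFixedPt f z := by
  by_contra! hfix
  obtain ⟨R, hR, hfR⟩ := hb.exists_pos_norm_lt
  have hsc : IsSimplyConnected (univ : Set ℂ) := by
    have := convex_univ.contractibleSpace (univ_nonempty (α := ℂ))
    exact SimplyConnectedSpace.ofContractible _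
  obtain ⟨L, hL, hLexp⟩ := exists_continuousOn_eqOn_exp_comp hsc isOpen_univ
    (g := fun z ↦ z - f z) (by fun_prop) (by
      rintro ⟨z, -, hz⟩
      exact hfix z (sub_eq_zero.1 hz).symm)
  have hslit : ∀ z ∈ sphere (0 : ℂ) R, 1 + -(f z / z) ∈ slitPlane := fun z hz ↦ by
    apply mem_slitPlane_of_norm_lt_one
    rw [norm_neg, norm_div, mem_sphere_zero_iff_norm.1 hz, div_lt_one hR]
    exact hfR _ (mem_range_self z)
  have hz0 : ∀ z ∈ sphere (0 : ℂ) R, z ≠ 0 := fun z hz ↦ ne_zero_of_mem_sphere hR.ne' ⟨z, hz⟩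
  refine not_forall_exp_eq_of_continuousOn_sphere hR
    (L := fun z ↦ L z - log (1 + -(f z / z))) ?_ fun z hz ↦ ?_
  · exact hL.mono (subset_univ _) |>.sub <| ContinuousOn.clog
      (continuousOn_const.add (hf.continuousOn.div continuousOn_id hz0).neg) hslit
  · rw [exp_sub, exp_log (slitPlane_ne_zero (hslit z hz)), show exp (L z) = z - f z from
      hLexp (mem_univ z)]
    field_simp [hz0 z hz]
    exact div_self (sub_ne_zero.2 fun h ↦ hfix z h.symm)

end Complex

theorem exists_isFixedPt_of_isBounded_range_real_prod {f : ℝ × ℝ → ℝ × ℝ} (hf : Continuous f)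
    (hb : Bornology.IsBounded (range f)) : ∃ p, IsFixedPt f p := by
  let e := Complex.equivRealProdCLM
  obtain ⟨z, hz⟩ := Complex.exists_isFixedPt_of_isBounded_range (f := e.symm ∘ f ∘ e)
    (by fun_prop) ((hb.image e.symm.toContinuousLinearMap).subset (by
      rintro _ ⟨z, rfl⟩; exact ⟨f (e z), mem_range_self _, rfl⟩))
  exact ⟨e z, by simpa [IsFixedPt] using congrArg e hz⟩

theorem exists_isFixedPt_of_mapsTo_Icc_prod {a b c d : ℝ} (hab : a ≤ b) (hcd : c ≤ d)
    {f : ℝ × ℝ → ℝ × ℝ} (hf : ContinuousOn f (Icc a b ×ˢ Icc c d))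
    (hmaps : MapsTo f (Icc a b ×ˢ Icc c d) (Icc a b ×ˢ Icc c d)) :
    ∃ p ∈ Icc a b ×ˢ Icc c d, IsFixedPt f p := by
  let proj : ℝ × ℝ → ℝ × ℝ := fun p ↦ (projIcc a b hab p.1, projIcc c d hcd p.2)
  have hproj : ∀ p, proj p ∈ Icc a b ×ˢ Icc c d := fun p ↦
    ⟨(projIcc a b hab p.1).2, (projIcc c d hcd p.2).2⟩
  obtain ⟨p, hp⟩ := exists_isFixedPt_of_isBounded_range_real_prod
    (hf.comp_continuous (by fun_prop) hproj)
    ((isBounded_Icc a b).prod (isBounded_Icc c d) |>.subset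
      (range_subset_iff.2 fun p ↦ hmaps (hproj p)))
  have hpD : p ∈ Icc a b ×ˢ Icc c d := hp ▸ hmaps (hproj p)
  have : proj p = p := Prod.ext (congrArg Subtype.val (projIcc_of_mem hab hpD.1))
    (congrArg Subtype.val (projIcc_of_mem hcd hpD.2))
  exact ⟨p, hpD, by simpa [IsFixedPt, comp_apply, this] using hp⟩

noncomputable def matchingMap (n r ε : ℝ) (F G : ℝ × ℝ → ℝ) (p : ℝ × ℝ) : ℝ × ℝ :=
  (F p + G p / (n - 2), ε ^ 2 / (4 * (1 + p.1)) + r ^ (n - 2) * G p / (n - 2))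

section matchingMap

variable {n r ε Λ : ℝ} {F G : ℝ × ℝ → ℝ}

theorem continuousOn_matchingMap (hF : Continuous F) (hG : Continuous G) :
    ContinuousOn (matchingMap n r ε F G) {p | p.1 ≠ -1} := by
  refine ContinuousOn.prodMk (by fun_prop) (ContinuousOn.add ?_ (by fun_prop))
  exact continuousOn_const.div (by fun_prop) fun p hp ↦ by
    have : 1 + p.1 ≠ 0 := fun h ↦ hp (by linarith)
    positivity

theorem mapsTo_matchingMap (hn : 2 < n) (hr : 0 ≤ r)
    (hbound : ∀ b lam : ℝ, |b| ≤ 1 / 2 → |lam| ≤ Λ →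
      |F (b, lam)| + |G (b, lam)| / (n - 2) ≤ 1 / 2 ∧
      ε ^ 2 / 2 + r ^ (n - 2) * |G (b, lam)| / (n - 2) ≤ Λ) :
    MapsTo (matchingMap n r ε F G) (Icc (-(1 / 2)) (1 / 2) ×ˢ Icc (-Λ) Λ)
      (Icc (-(1 / 2)) (1 / 2) ×ˢ Icc (-Λ) Λ) := by
  rintro ⟨b, lam⟩ ⟨hb, hlam⟩
  obtain ⟨hF, hG⟩ := hbound b lam (abs_le.2 hb) (abs_le.2 hlam)
  have hn2 : 0 < n - 2 := by linarith
  have hc : 0 ≤ r ^ (n - 2) := Real.rpow_nonneg hr _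
  have hq : 0 ≤ ε ^ 2 / (4 * (1 + b)) ∧ ε ^ 2 / (4 * (1 + b)) ≤ ε ^ 2 / 2 := by
    have : 2 ≤ 4 * (1 + b) := by linarith [hb.1]
    exact ⟨by positivity, div_le_div_of_nonneg_left (sq_nonneg ε) two_pos this⟩
  refine ⟨abs_le.1 ?_, abs_le.1 ?_⟩
  · calc |F (b, lam) + G (b, lam) / (n - 2)|
        ≤ |F (b, lam)| + |G (b, lam)| / (n - 2) := by
          simpa [abs_div, abs_of_pos hn2] using abs_add_le (F (b, lam)) (G (b, lam) / (n - 2))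
      _ ≤ 1 / 2 := hF
  · calc |ε ^ 2 / (4 * (1 + b)) + r ^ (n - 2) * G (b, lam) / (n - 2)|
        ≤ ε ^ 2 / (4 * (1 + b)) + r ^ (n - 2) * |G (b, lam)| / (n - 2) := by
          refine (abs_add_le _ _).trans_eq ?_
          rw [abs_of_nonneg hq.1, abs_div, abs_mul, abs_of_pos hn2, abs_of_nonneg hc]
      _ ≤ Λ := by linarith [hq.2]

theorem eqns_of_isFixedPt_matchingMap (hn : 2 < n) (hr : 0 < r) {b lam : ℝ}
    (hfix : IsFixedPt (matchingMap n r ε F G) (b, lam)) :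
    b + (ε ^ 2 / (4 * (1 + b)) - lam) * r ^ (2 - n) = F (b, lam) ∧
      (2 - n) * (ε ^ 2 / (4 * (1 + b)) - lam) * r ^ (2 - n) = G (b, lam) := by
  obtain ⟨hb, hlam⟩ := Prod.ext_iff.1 hfix
  simp only [matchingMap] at hb hlam
  have hn2 : n - 2 ≠ 0 := by linarith
  have hrpow : r ^ (n - 2) * r ^ (2 - n) = 1 := by
    rw [← Real.rpow_add hr, sub_add_sub_cancel', sub_self, Real.rpow_zero]
  have hkey : (ε ^ 2 / (4 * (1 + b)) - lam) * r ^ (2 - n) = -(G (b, lam) / (n - 2)) := by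
    rw [show ε ^ 2 / (4 * (1 + b)) - lam = -(r ^ (n - 2) * G (b, lam) / (n - 2)) by linarith]
    rw [show -(r ^ (n - 2) * G (b, lam) / (n - 2)) * r ^ (2 - n)
      = -(G (b, lam) / (n - 2)) * (r ^ (n - 2) * r ^ (2 - n)) by ring, hrpow, mul_one]
  constructor
  · linarith
  · rw [mul_assoc, hkey]
    field_simp
    ring

end matchingMap

theorem stmt_18_general (n : ℕ) (hn : 3 ≤ n) (r ε Λ : ℝ) (hr : 0 < r) (hΛ : 0 < Λ)
    (F G : ℝ × ℝ → ℝ) (hF : Continuous F) (hG : Continuous G)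
    (hbound : ∀ b lam : ℝ, |b| ≤ 1 / 2 → |lam| ≤ Λ →
      |F (b, lam)| + |G (b, lam)| / ((n : ℝ) - 2) ≤ 1 / 2 ∧
      ε ^ 2 / 2 + r ^ ((n : ℝ) - 2) * |G (b, lam)| / ((n : ℝ) - 2) ≤ Λ) :
    ∃ b lam : ℝ, |b| ≤ 1 / 2 ∧ |lam| ≤ Λ ∧
      b + (ε ^ 2 / (4 * (1 + b)) - lam) * r ^ (2 - (n : ℝ)) = F (b, lam) ∧
      (2 - (n : ℝ)) * (ε ^ 2 / (4 * (1 + b)) - lam) * r ^ (2 - (n : ℝ)) = G (b, lam) := by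
  have hn2 : (2 : ℝ) < n := by exact_mod_cast hn
  obtain ⟨⟨b, lam⟩, ⟨hb, hlam⟩, hfix⟩ := exists_isFixedPt_of_mapsTo_Icc_prod (by norm_num)
    (by linarith) ((continuousOn_matchingMap hF hG).mono fun p hp ↦
      ne_of_gt (by linarith [hp.1.1] : (-1 : ℝ) < p.1))
    (mapsTo_matchingMap hn2 hr.le hbound)
  exact ⟨b, lam, abs_le.2 hb, abs_le.2 hlam, eqns_of_isFixedPt_matchingMap hn2 hr hfix⟩

theorem stmt_18 (n : ℕ) (hn : 3 ≤ n) (r ε Λ : ℝ) (hr : 0 < r) (hε : 0 < ε) (hΛ : 0 < Λ)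
    (F G : ℝ × ℝ → ℝ) (hF : Continuous F) (hG : Continuous G)
    (hbound : ∀ b lam : ℝ, |b| ≤ 1 / 2 → |lam| ≤ Λ →
      |F (b, lam)| + |G (b, lam)| / ((n : ℝ) - 2) ≤ 1 / 2 ∧
      ε ^ 2 / 2 + r ^ ((n : ℝ) - 2) * |G (b, lam)| / ((n : ℝ) - 2) ≤ Λ) :
    ∃ b lam : ℝ, |b| ≤ 1 / 2 ∧ |lam| ≤ Λ ∧
      b + (ε ^ 2 / (4 * (1 + b)) - lam) * r ^ (2 - (n : ℝ)) = F (b, lam) ∧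
      (2 - (n : ℝ)) * (ε ^ 2 / (4 * (1 + b)) - lam) * r ^ (2 - (n : ℝ)) = G (b, lam) :=
  stmt_18_general n hn r ε Λ hr hΛ F G hF hG hbound
end
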